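/- Let Ω ⊆ ℝ^d be open and (u_ε)_{ε∈(0,1]} a moderate family of smooth functions on Ω. Then the following are equivalent: (a) there exists a negligible family (n_ε) such that (u_ε − n_ε) is of total slow scale type: for every compact K ⊆ Ω, every real s > 0 and every l ∈ ℕ, p_{K,l}(u_ε − n_ε) = o(ε^{−s}) as ε → 0; (b) for every x ∈ Ω and every real r > 0 there exist an open neighbourhood V ⊆ Ω of x and f ∈ C^∞(V) such that ε^r u_ε|_V → f in C^∞(V) as ε → 0. -/

import Mathlib

open Real Topology

noncomputable section

/-- Euclidean `d`-space. -/
abbrev Euc (d : ℕ) : Type := EuclideanSpace ℝ (Fin d)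

/-- Partial derivative in the `i`-th coordinate direction. -/
noncomputable def pderivE {d : ℕ} (i : Fin d) (f : Euc d → ℝ) : Euc d → ℝ :=
  fun x => fderiv ℝ f x (EuclideanSpace.single i (1 : ℝ))

/-- Iterated partial derivative `∂^α` along a list of coordinate directions
(a multi-index `α`, with `|α| = α.length`). -/
noncomputable def mderiv {d : ℕ} : List (Fin d) → (Euc d → ℝ) → Euc d → ℝ
  | [], f => f
  | i :: α, f => pderivE i (mderiv α f)

/-- A moderate family `(u_ε)_{ε ∈ (0,1]}` of smooth functions on `Ω`. -/
def Moderate {d : ℕ} (Ω : Set (Euc d)) (u : ℝ → Euc d → ℝ) : Prop :=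
  ∀ K ⊆ Ω, IsCompact K → ∀ l : ℕ, ∃ N : ℕ, ∃ C : ℝ, ∃ ε₀ > (0:ℝ),
    ∀ ε : ℝ, 0 < ε → ε < ε₀ → ∀ α : List (Fin d), α.length ≤ l →
      ∀ x ∈ K, |mderiv α (u ε) x| ≤ C * ε ^ (-(N : ℝ))

/-- A negligible family `(u_ε)_{ε ∈ (0,1]}` of smooth functions on `Ω`. -/
def Negligible {d : ℕ} (Ω : Set (Euc d)) (u : ℝ → Euc d → ℝ) : Prop :=
  ∀ K ⊆ Ω, IsCompact K → ∀ l m : ℕ, ∃ C : ℝ, ∃ ε₀ > (0:ℝ),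
    ∀ ε : ℝ, 0 < ε → ε < ε₀ → ∀ α : List (Fin d), α.length ≤ l →
      ∀ x ∈ K, |mderiv α (u ε) x| ≤ C * ε ^ (m : ℝ)

/-! Direction (b) ⇒ (a) holds with `n = 0`: near each point `ε^{s/2} ∂^α u_ε` converges
uniformly, so it is eventually bounded, i.e. `∂^α u_ε = O(ε^{-s/2}) = o(ε^{-s})` locally, and
compactness makes this uniform on `K`. For (a) ⇒ (b), a negligible family is itself of total slow
scale type, hence so is `u_ε`, and then `ε^r ∂^α u_ε = o(1)` uniformly on compacts, that is,
`ε^r u_ε → 0` in `C^∞(Ω)`. -/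

open Filter Metric Set Topology

section mderiv

variable {d : ℕ}

lemma mderiv_const_zero (α : List (Fin d)) : mderiv α (fun _ => (0:ℝ)) = fun _ => 0 := by
  induction α with
  | nil => rfl
  | cons i α ih =>
    show pderivE i (mderiv α fun _ => (0:ℝ)) = _
    rw [ih]
    funext x
    simp [pderivE]

variable {S : Set (Euc d)} {g h : Euc d → ℝ}

lemma contDiffOn_mderiv (hS : IsOpen S) (hg : ContDiffOn ℝ (⊤ : ℕ∞) g S) (α : List (Fin d)) :
    ContDiffOn ℝ (⊤ : ℕ∞) (mderiv α g) S := by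
  induction α with
  | nil => exact hg
  | cons i α ih =>
    exact (ih.fderiv_of_isOpen hS (by exact_mod_cast le_top)).clm_apply contDiffOn_const

lemma differentiableAt_mderiv (hS : IsOpen S) (hg : ContDiffOn ℝ (⊤ : ℕ∞) g S)
    (α : List (Fin d)) {x : Euc d} (hx : x ∈ S) : DifferentiableAt ℝ (mderiv α g) x :=
  ((contDiffOn_mderiv hS hg α).differentiableOn (by simp)).differentiableAt (hS.mem_nhds hx)

lemma mderiv_sub (hS : IsOpen S) (hg : ContDiffOn ℝ (⊤ : ℕ∞) g S)
    (hh : ContDiffOn ℝ (⊤ : ℕ∞) h S) (α : List (Fin d)) :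
    ∀ x ∈ S, mderiv α (fun y => g y - h y) x = mderiv α g x - mderiv α h x := by
  induction α with
  | nil => exact fun _ _ => rfl
  | cons i α ih =>
    intro x hx
    have heq : mderiv α (fun y => g y - h y) =ᶠ[𝓝 x] fun y => mderiv α g y - mderiv α h y :=
      eventuallyEq_of_mem (hS.mem_nhds hx) ih
    simp only [mderiv, pderivE]
    rw [heq.fderiv_eq, fderiv_fun_sub (differentiableAt_mderiv hS hg α hx)
      (differentiableAt_mderiv hS hh α hx)]
    rfl

lemma mderiv_const_mul (hS : IsOpen S) (hg : ContDiffOn ℝ (⊤ : ℕ∞) g S) (c : ℝ)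
    (α : List (Fin d)) : ∀ x ∈ S, mderiv α (fun y => c * g y) x = c * mderiv α g x := by
  induction α with
  | nil => exact fun _ _ => rfl
  | cons i α ih =>
    intro x hx
    have heq : mderiv α (fun y => c * g y) =ᶠ[𝓝 x] fun y => c * mderiv α g y :=
      eventuallyEq_of_mem (hS.mem_nhds hx) ih
    simp only [mderiv, pderivE]
    rw [heq.fderiv_eq, fderiv_const_mul (differentiableAt_mderiv hS hg α hx)]
    rfl

end mderiv

lemma eventually_nhdsGT_zero_iff {P : ℝ → Prop} :
    (∀ᶠ ε in 𝓝[>] (0:ℝ), P ε) ↔ ∃ ε₀ > (0:ℝ), ∀ ε : ℝ, 0 < ε → ε < ε₀ → P ε := by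
  rw [eventually_iff, mem_nhdsGT_iff_exists_Ioo_subset]
  exact exists_congr fun _ => and_congr Iff.rfl
    ⟨fun h ε h₀ h₁ => h ⟨h₀, h₁⟩, fun h ε hε => h ε hε.1 hε.2⟩

lemma eventually_mul_rpow_neg_le {r s : ℝ} (hrs : r < s) (M : ℝ) {c : ℝ} (hc : 0 < c) :
    ∀ᶠ ε in 𝓝[>] (0:ℝ), M * ε ^ (-r) ≤ c * ε ^ (-s) := by
  have hlim : Tendsto (fun ε : ℝ => M * ε ^ (s - r)) (𝓝[>] 0) (𝓝 0) := by
    have := ((Real.continuousAt_rpow_const 0 (s - r) (Or.inr (sub_pos.2 hrs).le)).tendsto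
      ).const_mul M
    rw [Real.zero_rpow (sub_pos.2 hrs).ne', mul_zero] at this
    exact this.mono_left nhdsWithin_le_nhds
  filter_upwards [hlim.eventually (gt_mem_nhds hc), self_mem_nhdsWithin] with ε hε hε₀
  calc M * ε ^ (-r) = M * ε ^ (s - r) * ε ^ (-s) := by
        rw [mul_assoc, ← Real.rpow_add hε₀]; ring_nf
    _ ≤ c * ε ^ (-s) := by gcongr; exact (Real.rpow_pos_of_pos hε₀ _).le

lemma abs_rpow_mul_le_iff {ε : ℝ} (hε : 0 < ε) (r a M : ℝ) :
    |ε ^ r * a| ≤ M ↔ |a| ≤ M * ε ^ (-r) := by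
  rw [abs_mul, abs_of_pos (Real.rpow_pos_of_pos hε r), Real.rpow_neg hε.le,
    le_mul_inv_iff₀ (Real.rpow_pos_of_pos hε r), mul_comm]

lemma IsCompact.eventually_forall_of_local {ι X : Type*} [TopologicalSpace X] {K : Set X}
    (hK : IsCompact K) {l : Filter ι} {P : ι → X → Prop}
    (h : ∀ x ∈ K, ∃ t ∈ 𝓝 x, ∀ᶠ i in l, ∀ y ∈ t, P i y) : ∀ᶠ i in l, ∀ y ∈ K, P i y :=
  hK.induction_on (by simp) (fun _ _ hst ht => ht.mono fun _ hi y hy => hi y (hst hy))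
    (fun _ _ hs ht => (hs.and ht).mono fun _ hi y hy => hy.elim (hi.1 y) (hi.2 y))
    fun x hx => let ⟨t, ht, hP⟩ := h x hx; ⟨t, mem_nhdsWithin_of_mem_nhds ht, hP⟩

section families

variable {d : ℕ} {Ω : Set (Euc d)}

def IsTotalSlowScale (Ω : Set (Euc d)) (v : ℝ → Euc d → ℝ) : Prop :=
  ∀ K ⊆ Ω, IsCompact K → ∀ s : ℝ, 0 < s → ∀ l : ℕ,
    ∀ c > (0:ℝ), ∃ ε₀ > (0:ℝ), ∀ ε : ℝ, 0 < ε → ε < ε₀ →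
      ∀ α : List (Fin d), α.length ≤ l → ∀ x ∈ K, |mderiv α (v ε) x| ≤ c * ε ^ (-s)

def TendstoCInfty (F : ℝ → Euc d → ℝ) (f : Euc d → ℝ) (V : Set (Euc d)) : Prop :=
  ∀ K ⊆ V, IsCompact K → ∀ α : List (Fin d), ∀ δ > (0:ℝ), ∃ ε₀ > (0:ℝ),
    ∀ ε : ℝ, 0 < ε → ε < ε₀ → ∀ y ∈ K, |mderiv α (F ε) y - mderiv α f y| ≤ δ

lemma isTotalSlowScale_iff {v : ℝ → Euc d → ℝ} :
    IsTotalSlowScale Ω v ↔ ∀ K ⊆ Ω, IsCompact K → ∀ α : List (Fin d), ∀ s > (0:ℝ),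
      ∀ c > (0:ℝ), ∀ᶠ ε in 𝓝[>] (0:ℝ), ∀ x ∈ K, |mderiv α (v ε) x| ≤ c * ε ^ (-s) := by
  refine forall₃_congr fun K _ _ => ⟨fun h α s hs c hc => ?_, fun h s hs l c hc => ?_⟩
  · obtain ⟨ε₀, hε₀, hv⟩ := h s hs α.length c hc
    exact eventually_nhdsGT_zero_iff.2 ⟨ε₀, hε₀, fun ε h₀ h₁ => hv ε h₀ h₁ α le_rfl⟩
  · have hα := (List.finite_length_le (Fin d) l).eventually_all.2 fun α _ => h α s hs c hc
    obtain ⟨ε₀, hε₀, hv⟩ := eventually_nhdsGT_zero_iff.1 hα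
    exact ⟨ε₀, hε₀, fun ε h₀ h₁ α hl => hv ε h₀ h₁ α hl⟩

lemma negligible_zero : Negligible Ω (fun _ _ => 0) := fun _ _ _ _ _ =>
  ⟨0, 1, one_pos, fun _ _ _ _ _ _ _ => by simp [mderiv_const_zero]⟩

lemma Negligible.isTotalSlowScale {n : ℝ → Euc d → ℝ} (hn : Negligible Ω n) :
    IsTotalSlowScale Ω n := by
  refine isTotalSlowScale_iff.2 fun K hK hKc α s hs c hc => ?_
  obtain ⟨C, ε₀, hε₀, hC⟩ := hn K hK hKc α.length 0
  filter_upwards [eventually_nhdsGT_zero_iff.2 ⟨ε₀, hε₀, fun ε h₀ h₁ => hC ε h₀ h₁ α le_rfl⟩,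
    eventually_mul_rpow_neg_le hs C hc] with ε hnε hCε x hx
  have hC : C * ε ^ ((0 : ℕ) : ℝ) ≤ c * ε ^ (-s) := by simpa using hCε
  exact (hnε x hx).trans hC

lemma TendstoCInfty.eventually_abs_mderiv_le {F : ℝ → Euc d → ℝ} {f : Euc d → ℝ}
    {V : Set (Euc d)} (hF : TendstoCInfty F f V) (hV : IsOpen V)
    (hf : ContDiffOn ℝ (⊤ : ℕ∞) f V) {K : Set (Euc d)} (hK : K ⊆ V) (hKc : IsCompact K)
    (α : List (Fin d)) : ∃ M, ∀ᶠ ε in 𝓝[>] (0:ℝ), ∀ y ∈ K, |mderiv α (F ε) y| ≤ M := by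
  obtain ⟨M, hM⟩ := hKc.exists_bound_of_continuousOn
    ((contDiffOn_mderiv hV hf α).continuousOn.mono hK)
  obtain ⟨ε₀, hε₀, hconv⟩ := hF K hK hKc α 1 one_pos
  refine ⟨M + 1, eventually_nhdsGT_zero_iff.2 ⟨ε₀, hε₀, fun ε h₀ h₁ y hy => ?_⟩⟩
  have := abs_sub_abs_le_abs_sub (mderiv α (F ε) y) (mderiv α f y)
  linarith [hconv ε h₀ h₁ y hy, (Real.norm_eq_abs _).symm.trans_le (hM y hy)]

section smooth

variable {u : ℝ → Euc d → ℝ}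

lemma IsTotalSlowScale.of_sub (hΩ : IsOpen Ω)
    (hu : ∀ ε ∈ Ioc (0:ℝ) 1, ContDiffOn ℝ (⊤ : ℕ∞) (u ε) Ω) {n : ℝ → Euc d → ℝ}
    (hn : ∀ ε ∈ Ioc (0:ℝ) 1, ContDiffOn ℝ (⊤ : ℕ∞) (n ε) Ω)
    (hun : IsTotalSlowScale Ω (fun ε y => u ε y - n ε y)) (hn' : IsTotalSlowScale Ω n) :
    IsTotalSlowScale Ω u := by
  rw [isTotalSlowScale_iff] at hun hn' ⊢
  intro K hK hKc α s hs c hc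
  filter_upwards [hun K hK hKc α s hs (c / 2) (half_pos hc),
    hn' K hK hKc α s hs (c / 2) (half_pos hc), Ioc_mem_nhdsGT one_pos] with ε hunε hnε hε x hx
  have hsplit : mderiv α (u ε) x = mderiv α (fun y => u ε y - n ε y) x + mderiv α (n ε) x := by
    rw [mderiv_sub hΩ (hu ε hε) (hn ε hε) α x (hK hx)]; ring
  rw [hsplit]
  linarith [abs_add_le (mderiv α (fun y => u ε y - n ε y) x) (mderiv α (n ε) x),
    hunε x hx, hnε x hx]

lemma IsTotalSlowScale.tendstoCInfty_rpow_mul (hslow : IsTotalSlowScale Ω u) (hΩ : IsOpen Ω)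
    (hu : ∀ ε ∈ Ioc (0:ℝ) 1, ContDiffOn ℝ (⊤ : ℕ∞) (u ε) Ω) {r : ℝ} (hr : 0 < r) :
    TendstoCInfty (fun ε z => ε ^ r * u ε z) (fun _ => 0) Ω := by
  intro K hK hKc α δ hδ
  refine eventually_nhdsGT_zero_iff.1 ?_
  filter_upwards [isTotalSlowScale_iff.1 hslow K hK hKc α r hr δ hδ, Ioc_mem_nhdsGT one_pos]
    with ε hbound hε y hy
  rw [mderiv_const_mul hΩ (hu ε hε) _ α y (hK hy), mderiv_const_zero, sub_zero,
    abs_rpow_mul_le_iff hε.1]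
  exact hbound y hy

lemma IsTotalSlowScale.of_forall_tendstoCInfty
    (hu : ∀ ε ∈ Ioc (0:ℝ) 1, ContDiffOn ℝ (⊤ : ℕ∞) (u ε) Ω)
    (h : ∀ x ∈ Ω, ∀ r : ℝ, 0 < r → ∃ V : Set (Euc d), IsOpen V ∧ x ∈ V ∧ V ⊆ Ω ∧
      ∃ f : Euc d → ℝ, ContDiffOn ℝ (⊤ : ℕ∞) f V ∧
        TendstoCInfty (fun ε z => ε ^ r * u ε z) f V) :
    IsTotalSlowScale Ω u := by
  refine isTotalSlowScale_iff.2 fun K hK hKc α s hs c hc => hKc.eventually_forall_of_local ?_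
  intro x hx
  obtain ⟨V, hV, hxV, hVΩ, f, hf, hconv⟩ := h x (hK hx) (s / 2) (half_pos hs)
  obtain ⟨ρ, hρ, hball⟩ := Metric.isOpen_iff.1 hV x hxV
  have hB : closedBall x (ρ / 2) ⊆ V := (closedBall_subset_ball (half_lt_self hρ)).trans hball
  obtain ⟨M, hM⟩ := hconv.eventually_abs_mderiv_le hV hf hB (isCompact_closedBall _ _) α
  refine ⟨closedBall x (ρ / 2), closedBall_mem_nhds x (half_pos hρ), ?_⟩
  filter_upwards [hM, eventually_mul_rpow_neg_le (half_lt_self hs) M hc,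
    Ioc_mem_nhdsGT one_pos] with ε hMε hMc hε y hy
  have hbound := hMε y hy
  rw [mderiv_const_mul hV ((hu ε hε).mono hVΩ) _ α y (hB hy),
    abs_rpow_mul_le_iff hε.1] at hbound
  exact hbound.trans hMc

end smooth

end families

theorem stmt17_general {d : ℕ} (Ω : Set (Euc d)) (hΩ : IsOpen Ω)
    (u : ℝ → Euc d → ℝ)
    (husmooth : ∀ ε ∈ Set.Ioc (0:ℝ) 1, ContDiffOn ℝ (⊤ : ℕ∞) (u ε) Ω) :
    (∃ nf : ℝ → Euc d → ℝ,
      (∀ ε ∈ Set.Ioc (0:ℝ) 1, ContDiffOn ℝ (⊤ : ℕ∞) (nf ε) Ω) ∧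
      Negligible Ω nf ∧
      -- `(u_ε − n_ε)` is of total slow scale type
      (∀ K ⊆ Ω, IsCompact K → ∀ s : ℝ, 0 < s → ∀ l : ℕ,
        ∀ c > (0:ℝ), ∃ ε₀ > (0:ℝ), ∀ ε : ℝ, 0 < ε → ε < ε₀ →
          ∀ α : List (Fin d), α.length ≤ l → ∀ x ∈ K,
            |mderiv α (fun y => u ε y - nf ε y) x| ≤ c * ε ^ (-s))) ↔
    (∀ x ∈ Ω, ∀ r : ℝ, 0 < r → ∃ V : Set (Euc d), IsOpen V ∧ x ∈ V ∧ V ⊆ Ω ∧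
      ∃ f : Euc d → ℝ, ContDiffOn ℝ (⊤ : ℕ∞) f V ∧
        -- `ε^r·u_ε → f` in `C^∞(V)`
        ∀ K ⊆ V, IsCompact K → ∀ α : List (Fin d), ∀ δ > (0:ℝ), ∃ ε₀ > (0:ℝ),
          ∀ ε : ℝ, 0 < ε → ε < ε₀ → ∀ y ∈ K,
            |mderiv α (fun z => ε ^ r * u ε z) y - mderiv α f y| ≤ δ) := by
  constructor
  · rintro ⟨n, hn, hneg, hslow⟩ x hx r hr
    have hu : IsTotalSlowScale Ω u :=
      IsTotalSlowScale.of_sub hΩ husmooth hn hslow hneg.isTotalSlowScale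
    exact ⟨Ω, hΩ, hx, subset_rfl, fun _ => 0, contDiffOn_const,
      hu.tendstoCInfty_rpow_mul hΩ husmooth hr⟩
  · intro h
    refine ⟨fun _ _ => 0, fun _ _ => contDiffOn_const, negligible_zero, ?_⟩
    simp only [sub_zero]
    exact IsTotalSlowScale.of_forall_tendstoCInfty husmooth h

/-- A moderate family `(u_ε)` on `Ω` differs by a negligible family
from a family of total slow scale type iff, locally around each point of `Ω` and for
every `r > 0`, `ε^r·u_ε` converges in `C^∞` to a smooth function. -/
theorem stmt17 {d : ℕ} (Ω : Set (Euc d)) (hΩ : IsOpen Ω)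
    (u : ℝ → Euc d → ℝ)
    (husmooth : ∀ ε ∈ Set.Ioc (0:ℝ) 1, ContDiffOn ℝ (⊤ : ℕ∞) (u ε) Ω)
    (humod : Moderate Ω u) :
    (∃ nf : ℝ → Euc d → ℝ,
      (∀ ε ∈ Set.Ioc (0:ℝ) 1, ContDiffOn ℝ (⊤ : ℕ∞) (nf ε) Ω) ∧
      Negligible Ω nf ∧
      -- `(u_ε − n_ε)` is of total slow scale type
      (∀ K ⊆ Ω, IsCompact K → ∀ s : ℝ, 0 < s → ∀ l : ℕ,
        ∀ c > (0:ℝ), ∃ ε₀ > (0:ℝ), ∀ ε : ℝ, 0 < ε → ε < ε₀ →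
          ∀ α : List (Fin d), α.length ≤ l → ∀ x ∈ K,
            |mderiv α (fun y => u ε y - nf ε y) x| ≤ c * ε ^ (-s))) ↔
    (∀ x ∈ Ω, ∀ r : ℝ, 0 < r → ∃ V : Set (Euc d), IsOpen V ∧ x ∈ V ∧ V ⊆ Ω ∧
      ∃ f : Euc d → ℝ, ContDiffOn ℝ (⊤ : ℕ∞) f V ∧
        -- `ε^r·u_ε → f` in `C^∞(V)`
        ∀ K ⊆ V, IsCompact K → ∀ α : List (Fin d), ∀ δ > (0:ℝ), ∃ ε₀ > (0:ℝ),
          ∀ ε : ℝ, 0 < ε → ε < ε₀ → ∀ y ∈ K,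
            |mderiv α (fun z => ε ^ r * u ε z) y - mderiv α f y| ≤ δ) :=
  stmt17_general Ω hΩ u husmooth

end
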